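/- arXiv:1806.03020 — 2 statements merged into one kernel-verified Lean document; each statement's English description precedes it below -/
import Mathlib

section
/- Let p ≥ 2 and ε ≥ 0. For all vectors X, Y ∈ ℝ^k, one has ((ε² + |X|²)^((p-2)/2) X − (ε² + |Y|²)^((p-2)/2) Y) · (X − Y) ≥ C(p) (ε² + |X|² + |Y|²)^((p-2)/2) |X − Y|², where C(p) > 0 depends only on p. -/
/-!
Expanding the inner product with the polarization identity gives, for `a = (ε² + |X|²)^α`,
`b = (ε² + |Y|²)^α` and `α = (p - 2)/2 ≥ 0`,
`2 (aX - bY)·(X - Y) = (a - b)(|X|² - |Y|²) + (a + b)|X - Y|²`.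
The first term is nonnegative because `t ↦ (ε² + t)^α` is monotone, and in the second
`ε² + |X|² + |Y|² ≤ (ε² + |X|²) + (ε² + |Y|²)` together with `(s + t)^α ≤ 2^α (s^α + t^α)`
bounds `a + b` below by `2^(-α) (ε² + |X|² + |Y|²)^α`; hence `C(p) = 2^(-α)/2` works.
-/

open RealInnerProductSpace

theorem real_inner_smul_sub_smul_sub {E : Type*} [NormedAddCommGroup E] [InnerProductSpace ℝ E]
    (a b : ℝ) (X Y : E) :
    ⟪a • X - b • Y, X - Y⟫ = ((a - b) * (‖X‖ ^ 2 - ‖Y‖ ^ 2) + (a + b) * ‖X - Y‖ ^ 2) / 2 := by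
  rw [norm_sub_sq_real]
  simp only [inner_sub_left, inner_sub_right, real_inner_smul_left, real_inner_self_eq_norm_sq,
    real_inner_comm Y X]
  ring

namespace Real

theorem rpow_sub_rpow_mul_sub_nonneg {s t α : ℝ} (hs : 0 ≤ s) (ht : 0 ≤ t) (hα : 0 ≤ α) :
    0 ≤ (s ^ α - t ^ α) * (s - t) := by
  rcases le_total s t with h | h
  · exact mul_nonneg_of_nonpos_of_nonpos (sub_nonpos.2 (rpow_le_rpow hs h hα)) (sub_nonpos.2 h)
  · exact mul_nonneg (sub_nonneg.2 (rpow_le_rpow ht h hα)) (sub_nonneg.2 h)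

theorem add_rpow_le_two_rpow_mul_rpow_add_rpow {s t α : ℝ} (hs : 0 ≤ s) (ht : 0 ≤ t)
    (hα : 0 ≤ α) : (s + t) ^ α ≤ 2 ^ α * (s ^ α + t ^ α) := calc
  (s + t) ^ α ≤ (2 * max s t) ^ α := by
    rw [two_mul]; gcongr <;> simp
  _ = 2 ^ α * max s t ^ α := mul_rpow zero_le_two (le_max_of_le_left hs)
  _ ≤ 2 ^ α * (s ^ α + t ^ α) := by
    gcongr
    rcases max_choice s t with h | h <;> rw [h]
    · exact le_add_of_nonneg_right (rpow_nonneg ht α)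
    · exact le_add_of_nonneg_left (rpow_nonneg hs α)

end Real

/-- Monotonicity inequality for the ε-perturbed p-Laplacian vector field,
with constant depending only on p (uniform in ε ≥ 0 and the dimension). -/
theorem stmt_0 (p : ℝ) (hp : 2 ≤ p) :
    ∃ C : ℝ, 0 < C ∧ ∀ (k : ℕ) (ε : ℝ), 0 ≤ ε →
      ∀ X Y : EuclideanSpace ℝ (Fin k),
        C * (ε ^ 2 + ‖X‖ ^ 2 + ‖Y‖ ^ 2) ^ ((p - 2) / 2) * ‖X - Y‖ ^ 2 ≤
          (inner ℝ ((ε ^ 2 + ‖X‖ ^ 2) ^ ((p - 2) / 2) • X - (ε ^ 2 + ‖Y‖ ^ 2) ^ ((p - 2) / 2) • Y)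
            (X - Y) : ℝ) := by
  set α := (p - 2) / 2
  have hα : 0 ≤ α := by simp only [α]; linarith
  refine ⟨(2 ^ α)⁻¹ / 2, by positivity, fun k ε _ X Y => ?_⟩
  set M := ε ^ 2 + ‖X‖ ^ 2 + ‖Y‖ ^ 2
  set s := ε ^ 2 + ‖X‖ ^ 2
  set t := ε ^ 2 + ‖Y‖ ^ 2
  have hs : 0 ≤ s := by positivity
  have ht : 0 ≤ t := by positivity
  have hsum : (2 ^ α)⁻¹ * M ^ α ≤ s ^ α + t ^ α := by
    rw [inv_mul_le_iff₀ (by positivity)]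
    exact (Real.rpow_le_rpow (by positivity) (by simp only [M, s, t]; nlinarith) hα).trans
      (Real.add_rpow_le_two_rpow_mul_rpow_add_rpow hs ht hα)
  have hdiff : ‖X‖ ^ 2 - ‖Y‖ ^ 2 = s - t := by ring
  rw [real_inner_smul_sub_smul_sub, hdiff]
  calc (2 ^ α)⁻¹ / 2 * M ^ α * ‖X - Y‖ ^ 2 = (2 ^ α)⁻¹ * M ^ α * ‖X - Y‖ ^ 2 / 2 := by ring
    _ ≤ (s ^ α + t ^ α) * ‖X - Y‖ ^ 2 / 2 := by gcongr
    _ ≤ _ := by linarith [Real.rpow_sub_rpow_mul_sub_nonneg hs ht hα]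
end

section
/- Let λ : Ω → ℂ be a function and u : Ω → ℂ satisfy 2λ u_{zz̄} + λ_{z̄} u_z + λ_z u_{z̄} = 0 (all functions smooth, Ω ⊂ ℂ open). Then 2λ (conj(u_{z̄}) u_{zz̄} − u_z conj(u_{zz̄})) = J λ_z, where J = |u_z|² − |u_{z̄}|². -/
open Complex

/-- Wirtinger derivative ∂/∂z of a map f : ℂ → ℂ (viewed as an ℝ-differentiable map). -/
noncomputable def wz (f : ℂ → ℂ) (z : ℂ) : ℂ :=
  (fderiv ℝ f z 1 - Complex.I * fderiv ℝ f z Complex.I) / 2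

/-- Wirtinger derivative ∂/∂z̄ of a map f : ℂ → ℂ. -/
noncomputable def wzb (f : ℂ → ℂ) (z : ℂ) : ℂ :=
  (fderiv ℝ f z 1 + Complex.I * fderiv ℝ f z Complex.I) / 2

/-- The ℝ-derivative of a real-valued function ℂ → ℂ takes real values. -/
lemma fderiv_im_zero (lam : ℂ → ℂ) (hlam : ContDiff ℝ (⊤ : ℕ∞) lam)
    (hreal : ∀ z, (lam z).im = 0) (z v : ℂ) : ((fderiv ℝ lam z) v).im = 0 := by
  have hd : DifferentiableAt ℝ lam z := (hlam.differentiable (by simp)) z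
  have h1 : fderiv ℝ (fun w => Complex.imCLM (lam w)) z
      = Complex.imCLM.comp (fderiv ℝ lam z) :=
    (Complex.imCLM.hasFDerivAt.comp z hd.hasFDerivAt).fderiv
  have h2 : (fun w => Complex.imCLM (lam w)) = fun _ => (0 : ℝ) := by
    funext w; exact hreal w
  have h3 : fderiv ℝ (fun w => Complex.imCLM (lam w)) z = 0 := by
    rw [h2]; exact fderiv_const_apply 0
  have := congrArg (fun L => (L : ℂ →L[ℝ] ℝ) v) (h1.symm.trans h3)
  simpa using this

/-- If 2λ u_{zz̄} + λ_{z̄} u_z + λ_z u_{z̄} = 0 on Ω with λ real-valued, then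
2λ(conj(u_{z̄}) u_{zz̄} − u_z conj(u_{zz̄})) = J λ_z, where J = |u_z|² − |u_{z̄}|². -/
theorem stmt_6 (Ω : Set ℂ) (hΩ : IsOpen Ω) (u lam : ℂ → ℂ)
    (hu : ContDiff ℝ (⊤ : ℕ∞) u) (hlam : ContDiff ℝ (⊤ : ℕ∞) lam)
    (hreal : ∀ z, (lam z).im = 0)
    (heq : ∀ z ∈ Ω,
      2 * lam z * wzb (wz u) z + wzb lam z * wz u z + wz lam z * wzb u z = 0) :
    ∀ z ∈ Ω,
      2 * lam z * (starRingEnd ℂ (wzb u z) * wzb (wz u) z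
          - wz u z * starRingEnd ℂ (wzb (wz u) z)) =
        ((‖wz u z‖ ^ 2 - ‖wzb u z‖ ^ 2 : ℝ) : ℂ) * wz lam z := by
  intro z hz
  have hone : ((fderiv ℝ lam z) 1).im = 0 := fderiv_im_zero lam hlam hreal z 1
  have hI : ((fderiv ℝ lam z) Complex.I).im = 0 := fderiv_im_zero lam hlam hreal z Complex.I
  have c1 : starRingEnd ℂ ((fderiv ℝ lam z) 1) = (fderiv ℝ lam z) 1 :=
    Complex.conj_eq_iff_im.mpr hone
  have cI : starRingEnd ℂ ((fderiv ℝ lam z) Complex.I) = (fderiv ℝ lam z) Complex.I :=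
    Complex.conj_eq_iff_im.mpr hI
  have hconjQ : starRingEnd ℂ (wzb lam z) = wz lam z := by
    simp [wz, wzb, map_div₀, map_add, map_mul, map_ofNat, Complex.conj_I, c1, cI]
    ring
  have hconjP : starRingEnd ℂ (wz lam z) = wzb lam z := by
    simp [wz, wzb, map_div₀, map_sub, map_mul, map_ofNat, Complex.conj_I, c1, cI]
  have hconjL : starRingEnd ℂ (lam z) = lam z := Complex.conj_eq_iff_im.mpr (hreal z)
  set A := wz u z
  set B := wzb u z
  set M := wzb (wz u) z
  set L := lam z
  set P := wz lam z
  set Q := wzb lam z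
  have eq1 : 2 * L * M + Q * A + P * B = 0 := heq z hz
  have eq2 : 2 * L * starRingEnd ℂ M + P * starRingEnd ℂ A + Q * starRingEnd ℂ B = 0 := by
    have h := congrArg (starRingEnd ℂ) eq1
    simp only [map_add, map_mul, map_ofNat, map_zero, hconjQ, hconjP, hconjL] at h
    linear_combination h
  have hA : ((‖A‖ ^ 2 : ℝ) : ℂ) = starRingEnd ℂ A * A := by
    rw [← Complex.normSq_eq_conj_mul_self, ← Complex.sq_norm]
  have hB : ((‖B‖ ^ 2 : ℝ) : ℂ) = starRingEnd ℂ B * B := by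
    rw [← Complex.normSq_eq_conj_mul_self, ← Complex.sq_norm]
  rw [Complex.ofReal_sub, hA, hB]
  linear_combination (starRingEnd ℂ B) * eq1 - A * eq2
end
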